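/- arXiv:1603.06964 — 2 statements merged into one kernel-verified Lean document; each statement's English description precedes it below -/
import Mathlib

section
/- If G is a non-complete double-critical k-chromatic graph, then the minimum degree of G is at least k + 1. -/
/-!
Write `k = n + 2`. If `G - u - v` is coloured with `n` colours, every colour class `a` contains a
common neighbour of `u` and `v`: otherwise `u` and the neighbours of `v` coloured `a` take a new
colour and `v` takes `a`, colouring `G` with `n + 1` colours. So adjacent vertices have at least
`n` common neighbours, and a neighbour of `v` misses at most `deg v - n - 1` other neighbours
of `v`. There is no `(n + 2)`-clique `S`: an edge `ab` leaving `S` would leave the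
`(n + 1)`-clique `S \ {a}` in the `n`-colourable `G - a - b`. Hence `deg v = n + 1` fails, since
`v` and its neighbours would form such a clique, and so does `deg v = n + 2`: then `v` has
non-adjacent neighbours `x, y`, and the common neighbour of `x` and `v` coloured like `y` in
`G - x - v` is a second neighbour of `v` missed by `y`.
-/

open SimpleGraph Finset

/-- A connected graph `G` with chromatic number `t` is double-critical if removing the two
ends of any edge decreases the chromatic number by two. -/
def DoubleCritical {V : Type*} (G : SimpleGraph V) (t : ℕ) : Prop :=
  G.Connected ∧ G.chromaticNumber = (t : ℕ∞) ∧
    ∀ u v : V, G.Adj u v →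
      (G.induce ({u, v}ᶜ : Set V)).chromaticNumber = ((t - 2 : ℕ) : ℕ∞)

namespace SimpleGraph

variable {V α : Type*} {G : SimpleGraph V} {n : ℕ} {u v : V}

theorem colorable_of_forall_commonNeighbor_color_ne [Fintype α]
    (c : (G.induce ({u, v}ᶜ : Set V)).Coloring α) (a : α)
    (h : ∀ w (hw : w ∈ ({u, v}ᶜ : Set V)), G.Adj u w → G.Adj v w → c ⟨w, hw⟩ ≠ a) :
    G.Colorable (Fintype.card α + 1) := by
  classical
  let f : V → Option α := fun x =>
    if hx : x ∈ ({u, v}ᶜ : Set V) then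
      if G.Adj v x ∧ c ⟨x, hx⟩ = a then none else some (c ⟨x, hx⟩)
    else if x = v then some a else none
  have hf : ∀ {x y}, G.Adj x y → f x ≠ f y := by
    intro x y hxy
    have hc : ∀ hx hy, c ⟨x, hx⟩ ≠ c ⟨y, hy⟩ := fun hx hy => c.valid (by simpa using hxy)
    simp only [f]
    split_ifs <;> grind [G.ne_of_adj, G.adj_symm]
  simpa using (Coloring.mk f hf).colorable

theorem exists_commonNeighbor_color_eq (hG : ¬ G.Colorable (n + 1))
    (c : (G.induce ({u, v}ᶜ : Set V)).Coloring (Fin n)) (a : Fin n) :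
    ∃ w, ∃ hw : w ∈ ({u, v}ᶜ : Set V), G.Adj u w ∧ G.Adj v w ∧ c ⟨w, hw⟩ = a := by
  by_contra! h
  exact hG (by simpa using colorable_of_forall_commonNeighbor_color_ne c a h)

theorem le_card_neighborFinset_inter [Fintype V] [DecidableRel G.Adj] [DecidableEq V]
    (hG : ¬ G.Colorable (n + 1)) (hc : (G.induce ({u, v}ᶜ : Set V)).Colorable n) :
    n ≤ #(G.neighborFinset u ∩ G.neighborFinset v) := by
  obtain ⟨c⟩ := hc
  choose w hw huw hvw hcw using exists_commonNeighbor_color_eq hG c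
  have hinj : Set.InjOn w (univ : Finset (Fin n)) := fun a _ b _ hab => by
    rw [← hcw a, ← hcw b]
    simp only [hab]
  simpa using card_le_card_of_injOn w (fun a _ => by simp [huw a, hvw a]) hinj

theorem exists_commonNeighbor_not_adj {y : V} (hG : ¬ G.Colorable (n + 1))
    (hc : (G.induce ({u, v}ᶜ : Set V)).Colorable n) (hyu : y ≠ u) (hyv : y ≠ v) :
    ∃ w, G.Adj u w ∧ G.Adj v w ∧ ¬ G.Adj w y := by
  obtain ⟨c⟩ := hc
  have hy : y ∈ ({u, v}ᶜ : Set V) := by simp [hyu, hyv]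
  obtain ⟨w, hw, huw, hvw, hcw⟩ := exists_commonNeighbor_color_eq hG c (c ⟨y, hy⟩)
  exact ⟨w, huw, hvw, fun hwy => c.valid (by simpa using hwy) hcw⟩

theorem cliqueFree_of_forall_adj_colorable (hconn : G.Preconnected) (htop : G ≠ ⊤)
    (hcrit : ∀ u v, G.Adj u v → (G.induce ({u, v}ᶜ : Set V)).Colorable n) :
    G.CliqueFree (n + 2) := by
  classical
  intro S hS
  obtain ⟨z, hz⟩ : ∃ z, z ∉ S := by
    by_contra! hS_univ
    exact htop <| isClique_univ.mp <| by
      simpa [Set.eq_univ_iff_forall.mpr hS_univ] using hS.isClique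
  obtain ⟨s, hs⟩ : S.Nonempty := by simp [← card_pos, hS.card_eq]
  obtain ⟨d, -, ha, hb⟩ := (hconn s z).some.exists_boundary_dart S hs hz
  have hsub : ∀ x ∈ S.erase d.fst, x ∈ ({d.fst, d.snd}ᶜ : Set V) := fun x hx => by
    simp only [Set.mem_compl_iff, Set.mem_insert_iff, Set.mem_singleton_iff, not_or]
    exact ⟨ne_of_mem_erase hx, fun h => hb (h ▸ mem_of_mem_erase hx)⟩
  have := (hcrit d.fst d.snd d.adj).card_le_of_pairwise_adj
    (fun x : S.erase d.fst => (⟨x, hsub x x.2⟩ : ({d.fst, d.snd}ᶜ : Set V)))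
    (fun x y hxy => hS.isClique (mem_of_mem_erase x.2) (mem_of_mem_erase y.2)
      (Subtype.coe_ne_coe.mpr hxy))
  rw [Nat.card_eq_fintype_card, Fintype.card_coe, card_erase_of_mem ha, hS.card_eq] at this
  omega

section Degree

variable [Fintype V] [DecidableRel G.Adj] [DecidableEq V]

theorem card_sdiff_insert_neighborFinset_add_le_degree (hG : ¬ G.Colorable (n + 1))
    (hcrit : ∀ u v, G.Adj u v → (G.induce ({u, v}ᶜ : Set V)).Colorable n) {p : V}
    (hpv : G.Adj p v) :
    #(G.neighborFinset v \ insert p (G.neighborFinset p)) + n + 1 ≤ G.degree v := by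
  have hcommon := le_card_neighborFinset_inter hG (hcrit p v hpv)
  have hinter : G.neighborFinset v ∩ insert p (G.neighborFinset p) =
      insert p (G.neighborFinset p ∩ G.neighborFinset v) := by
    ext x
    by_cases hx : x = p
    · simp [hx, hpv.symm]
    · simp [hx, and_comm]
  have hsplit := card_inter_add_card_sdiff (G.neighborFinset v) (insert p (G.neighborFinset p))
  rw [hinter, card_insert_of_notMem (by simp), card_neighborFinset_eq_degree] at hsplit
  omega

theorem degree_ne_add_one (hG : ¬ G.Colorable (n + 1))
    (hcrit : ∀ u v, G.Adj u v → (G.induce ({u, v}ᶜ : Set V)).Colorable n)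
    (hcf : G.CliqueFree (n + 2)) (v : V) : G.degree v ≠ n + 1 := by
  intro hd
  have hclique : G.IsClique (G.neighborFinset v : Set V) := by
    intro p hp q hq hpq
    by_contra hnpq
    have hq' : q ∈ G.neighborFinset v \ insert p (G.neighborFinset p) := by
      simp_all [Ne.symm hpq]
    have := card_sdiff_insert_neighborFinset_add_le_degree hG hcrit
      (G.adj_symm (by simpa using hp))
    have := card_pos.mpr ⟨q, hq'⟩
    omega
  refine hcf (insert v (G.neighborFinset v)) ⟨?_, ?_⟩
  · rw [coe_insert, isClique_insert]
    exact ⟨hclique, fun b hb _ => by simpa using hb⟩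
  · rw [card_insert_of_notMem (by simp), card_neighborFinset_eq_degree, hd]

theorem degree_ne_add_two (hG : ¬ G.Colorable (n + 1))
    (hcrit : ∀ u v, G.Adj u v → (G.induce ({u, v}ᶜ : Set V)).Colorable n)
    (hcf : G.CliqueFree (n + 2)) (v : V) : G.degree v ≠ n + 2 := by
  intro hd
  have hnclique : ¬ G.IsClique (G.neighborFinset v : Set V) :=
    fun h => hcf _ ⟨h, by rw [card_neighborFinset_eq_degree, hd]⟩
  simp only [IsClique, Set.Pairwise, not_forall, mem_coe, mem_neighborFinset] at hnclique
  obtain ⟨x, hvx, y, hvy, hxy, hnxy⟩ := hnclique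
  obtain ⟨w, hxw, hvw, hwy⟩ :=
    exists_commonNeighbor_not_adj hG (hcrit x v hvx.symm) hxy.symm hvy.ne.symm
  have hsub : {x, w} ⊆ G.neighborFinset v \ insert y (G.neighborFinset y) := by
    have hwy' : w ≠ y := fun h => hnxy (h ▸ hxw)
    simp only [insert_subset_iff, singleton_subset_iff, mem_sdiff, mem_insert, mem_neighborFinset]
    exact ⟨⟨hvx, not_or.mpr ⟨hxy, mt G.adj_symm hnxy⟩⟩,
      ⟨hvw, not_or.mpr ⟨hwy', mt G.adj_symm hwy⟩⟩⟩
  have := card_le_card hsub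
  rw [card_pair hxw.ne] at this
  have := card_sdiff_insert_neighborFinset_add_le_degree hG hcrit hvy.symm
  omega

theorem add_three_le_degree [Nontrivial V] (hG : ¬ G.Colorable (n + 1))
    (hcrit : ∀ u v, G.Adj u v → (G.induce ({u, v}ᶜ : Set V)).Colorable n)
    (hconn : G.Preconnected) (htop : G ≠ ⊤) (v : V) :
    n + 3 ≤ G.degree v := by
  have hcf := cliqueFree_of_forall_adj_colorable hconn htop hcrit
  obtain ⟨p, hvp⟩ := hconn.exists_adj_of_nontrivial v
  have := card_sdiff_insert_neighborFinset_add_le_degree hG hcrit hvp.symm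
  have := degree_ne_add_one hG hcrit hcf v
  have := degree_ne_add_two hG hcrit hcf v
  omega

end Degree

end SimpleGraph

/-- If `G` is a non-complete double-critical `k`-chromatic graph, then `δ(G) ≥ k + 1`. -/
theorem double_critical_minDegree {V : Type} [Fintype V] (G : SimpleGraph V)
    [DecidableRel G.Adj] (k : ℕ) (hnc : G ≠ ⊤) (hdc : DoubleCritical G k) :
    k + 1 ≤ G.minDegree := by
  classical
  obtain ⟨hconn, hχ, hcrit⟩ := hdc
  obtain ⟨a, b, hab, -⟩ := ne_top_iff_exists_not_adj.mp hnc
  have : Nontrivial V := ⟨⟨a, b, hab⟩⟩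
  obtain ⟨_, ha⟩ := hconn.preconnected.exists_adj_of_nontrivial a
  obtain ⟨n, rfl⟩ : ∃ n, k = n + 2 :=
    Nat.exists_eq_add_of_le' (by exact_mod_cast hχ ▸ two_le_chromaticNumber_of_adj ha)
  have hG : ¬ G.Colorable (n + 1) := fun h => by
    have := hχ ▸ h.chromaticNumber_le
    norm_cast at this
    omega
  have hcrit' : ∀ u v, G.Adj u v → (G.induce ({u, v}ᶜ : Set V)).Colorable n := fun u v h =>
    chromaticNumber_le_iff_colorable.mp (by simp [hcrit u v h])
  exact le_minDegree_of_forall_le_degree _ _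
    (add_three_le_degree hG hcrit' hconn.preconnected hnc)
end

section
/- If G is a non-complete double-critical k-chromatic graph, then every edge xy ∈ E(G) belongs to at least k − 2 triangles, i.e., the vertices x and y have at least k − 2 common neighbors. -/
/-- If `G` is a non-complete double-critical `k`-chromatic graph, then every edge `xy` of `G`
belongs to at least `k - 2` triangles, i.e. `x` and `y` have at least `k - 2` common
neighbors. -/
theorem double_critical_triangles {V : Type} [Fintype V] [DecidableEq V] (G : SimpleGraph V)
    [DecidableRel G.Adj] (k : ℕ) (hnc : G ≠ ⊤) (hdc : DoubleCritical G k) :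
    ∀ x y : V, G.Adj x y → k - 2 ≤ (G.neighborFinset x ∩ G.neighborFinset y).card := by
  intro x y hxy
  rcases Nat.lt_or_ge k 3 with hk | hk
  · omega
  obtain ⟨hconn, hchi, hdcr⟩ := hdc
  have hcol : (G.induce ({x, y}ᶜ : Set V)).Colorable (k - 2) := by
    rw [← SimpleGraph.chromaticNumber_le_iff_colorable, hdcr x y hxy]
  obtain ⟨c⟩ := hcol
  classical
  have hmem : ∀ v : V, v ≠ x → v ≠ y → v ∈ ({x, y}ᶜ : Set V) := by
    intro v h1 h2; simp [h1, h2]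
  have key : ∀ i : Fin (k - 2), ∃ v : V,
      v ∈ G.neighborFinset x ∩ G.neighborFinset y ∧
      ∃ hv : v ∈ ({x, y}ᶜ : Set V), c ⟨v, hv⟩ = i := by
    intro i
    by_contra hno
    push_neg at hno
    have hnocol : ¬ G.Colorable (k - 1) := by
      intro h
      have h1 : G.chromaticNumber ≤ ((k - 1 : ℕ) : ℕ∞) := by
        rw [SimpleGraph.chromaticNumber_le_iff_colorable]; exact h
      rw [hchi] at h1
      have := Nat.cast_le.mp h1
      omega
    apply hnocol
    have C : G.Coloring (Option (Fin (k - 2))) := by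
      refine SimpleGraph.Coloring.mk (fun v =>
        if hvx : v = x then some i
        else if hvy : v = y then none
        else if G.Adj x v ∧ c ⟨v, hmem v hvx hvy⟩ = i then none
        else some (c ⟨v, hmem v hvx hvy⟩)) ?_
      intro u v huv
      have hne := huv.ne
      by_cases hux : u = x
      · have hvx : v ≠ x := fun h => hne (hux.trans h.symm)
        by_cases hvy : v = y
        · simp only [dif_pos hux, dif_neg hvx, dif_pos hvy]; simp
        · simp only [dif_pos hux, dif_neg hvx, dif_neg hvy]
          split_ifs with hc
          · simp
          · simp only [ne_eq, Option.some.injEq]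
            intro hcon
            exact hc ⟨hux ▸ huv, hcon.symm⟩
      · by_cases hvx : v = x
        · by_cases huy : u = y
          · simp only [dif_neg hux, dif_pos huy, dif_pos hvx]; simp
          · simp only [dif_neg hux, dif_neg huy, dif_pos hvx]
            split_ifs with hc
            · simp
            · simp only [ne_eq, Option.some.injEq]
              intro hcon
              exact hc ⟨hvx ▸ huv.symm, hcon⟩
        · by_cases huy : u = y
          · have hvy : v ≠ y := fun h => hne (huy.trans h.symm)
            simp only [dif_neg hux, dif_pos huy, dif_neg hvx, dif_neg hvy]
            split_ifs with hc
            · exfalso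
              have hmv : v ∈ G.neighborFinset x ∩ G.neighborFinset y := by
                simp [SimpleGraph.mem_neighborFinset, hc.1, (huy ▸ huv : G.Adj y v)]
              exact hno v hmv (hmem v hvx hvy) hc.2
            · simp
          · by_cases hvy : v = y
            · simp only [dif_neg hux, dif_neg huy, dif_neg hvx, dif_pos hvy]
              split_ifs with hc
              · exfalso
                have hmu : u ∈ G.neighborFinset x ∩ G.neighborFinset y := by
                  simp [SimpleGraph.mem_neighborFinset, hc.1, (hvy ▸ huv : G.Adj u y).symm]
                exact hno u hmu (hmem u hux huy) hc.2
              · simp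
            · have hcc : c ⟨u, hmem u hux huy⟩ ≠ c ⟨v, hmem v hvx hvy⟩ := by
                exact c.valid (by exact huv)
              simp only [dif_neg hux, dif_neg huy, dif_neg hvx, dif_neg hvy]
              by_cases hcu : G.Adj x u ∧ c ⟨u, hmem u hux huy⟩ = i
              · by_cases hcv : G.Adj x v ∧ c ⟨v, hmem v hvx hvy⟩ = i
                · exact absurd (hcu.2.trans hcv.2.symm) hcc
                · simp [hcu, hcv]
              · by_cases hcv : G.Adj x v ∧ c ⟨v, hmem v hvx hvy⟩ = i
                · simp [hcu, hcv]
                · simp only [if_neg hcu, if_neg hcv, ne_eq, Option.some.injEq]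
                  exact hcc
    have := C.colorable
    have hcard : Fintype.card (Option (Fin (k - 2))) = k - 1 := by
      simp; omega
    rwa [hcard] at this
  choose g hg1 hg2 using key
  have hinj : Set.InjOn g (Finset.univ : Finset (Fin (k - 2))) := by
    intro i _ j _ hij
    obtain ⟨hi, hci⟩ := hg2 i
    obtain ⟨hj, hcj⟩ := hg2 j
    rw [← hci, ← hcj]
    congr 1
    exact Subtype.ext hij
  have := Finset.card_le_card_of_injOn g (fun i _ => hg1 i) hinj
  simpa using this
end
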